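/- arXiv:2412.19748 — 2 statements merged into one kernel-verified Lean document; each statement's English description precedes it below -/
import Mathlib

section
/- Let M be a positive integer, let B and A be M×M complex Hermitian positive semidefinite matrices, and let g ∈ ℂ^M be a vector such that the (real) quadratic form gᴴBg is strictly positive. Define b̄ = Bg / √(gᴴBg), B̄ = b̄b̄ᴴ, and Ā = B + A − B̄. Then: (i) B̄ is Hermitian positive semidefinite with rank at most 1; (ii) Ā is Hermitian positive semidefinite; (iii) B̄ + Ā = B + A; (iv) trace(B̄) + trace(Ā) = trace(B) + trace(A); and (v) gᴴB̄g = gᴴBg. (Consequently the reconstructed pair (B̄, Ā) is feasible for the semidefinite-relaxed beamforming problem and attains the same objective value as (B, A).) -/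
open Matrix ComplexOrder

private lemma quad_vecMulVec {M : ℕ} (u w : Fin M → ℂ) :
    star w ⬝ᵥ (vecMulVec u (star u)) *ᵥ w = (star w ⬝ᵥ u) * (star u ⬝ᵥ w) := by
  simp only [mulVec, dotProduct, vecMulVec_apply, Pi.star_apply]
  rw [Finset.sum_mul_sum]
  refine Finset.sum_congr rfl fun i _ => ?_
  rw [Finset.mul_sum]
  exact Finset.sum_congr rfl fun j _ => by ring

/-- Lemma 1 of the paper: from a converged SDR solution `(B, A)` one can construct a
rank-one information beamforming matrix `Bbar = bbar bbarᴴ` with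
`bbar = B g / √(gᴴ B g)` and a sensing covariance `Abar = B + A - Bbar` that are
feasible and attain the same objective. -/
theorem lemma1_rank_one_reconstruction
    (M : ℕ) (hM : 0 < M)
    (B A : Matrix (Fin M) (Fin M) ℂ)
    (hB : B.PosSemidef) (hA : A.PosSemidef)
    (g : Fin M → ℂ)
    (hg : 0 < star g ⬝ᵥ B *ᵥ g)
    (bbar : Fin M → ℂ)
    (hbbar : bbar = fun i => (B *ᵥ g) i / ((Real.sqrt ((star g ⬝ᵥ B *ᵥ g).re) : ℝ) : ℂ))
    (Bbar Abar : Matrix (Fin M) (Fin M) ℂ)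
    (hBbar : Bbar = vecMulVec bbar (star bbar))
    (hAbar : Abar = B + A - Bbar) :
    Bbar.PosSemidef ∧ Bbar.rank ≤ 1 ∧ Abar.PosSemidef ∧
      Bbar + Abar = B + A ∧
      Bbar.trace + Abar.trace = B.trace + A.trace ∧
      star g ⬝ᵥ Bbar *ᵥ g = star g ⬝ᵥ B *ᵥ g := by
  set α : ℂ := star g ⬝ᵥ B *ᵥ g with hα
  have hlt := Complex.lt_def.mp hg
  have hαre : 0 < α.re := by simpa using hlt.1
  have hαim : α.im = 0 := by simpa using hlt.2.symm
  have hα0 : α ≠ 0 := ne_of_gt hg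
  have hαstar : star α = α := by
    apply Complex.ext <;> simp [hαim]
  set s : ℝ := Real.sqrt α.re with hs
  have hs2 : (s : ℂ) * (s : ℂ) = α := by
    rw [← Complex.ofReal_mul, Real.mul_self_sqrt hαre.le]
    exact Complex.ext (by simp) (by simp [hαim])
  have hs0 : (s : ℂ) ≠ 0 := by
    intro h
    exact hα0 (by rw [← hs2, h, mul_zero])
  -- Bbar is PSD
  have hBbarPSD : Bbar.PosSemidef := by
    rw [hBbar, vecMulVec_eq Unit, ← conjTranspose_replicateCol]
    exact posSemidef_self_mul_conjTranspose _
  -- rank ≤ 1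
  have hrank : Bbar.rank ≤ 1 := by
    rw [hBbar, vecMulVec_eq Unit]
    calc (replicateCol Unit bbar * replicateRow Unit (star bbar)).rank ≤ (replicateCol Unit bbar).rank :=
          rank_mul_le_left _ _
      _ ≤ Fintype.card Unit := rank_le_card_width _
      _ = 1 := by simp
  -- basic dot product facts
  have hflip : ∀ v w : Fin M → ℂ, star (B *ᵥ v) ⬝ᵥ w = star v ⬝ᵥ B *ᵥ w := by
    intro v w
    rw [star_mulVec, ← dotProduct_mulVec, hB.1.eq]
  have hconj : ∀ v w : Fin M → ℂ, star w ⬝ᵥ B *ᵥ v = star (star v ⬝ᵥ B *ᵥ w) := by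
    intro v w
    have h := congrArg star (hflip v w)
    rwa [star_dotProduct, star_star] at h
  have hbbar' : bbar = ((s : ℂ))⁻¹ • (B *ᵥ g) := by
    funext i; simp [hbbar, div_eq_inv_mul]
  have hstarbbar : star bbar = ((s : ℂ))⁻¹ • star (B *ᵥ g) := by
    rw [hbbar', star_smul]
    congr 1
    simp [Complex.star_def, Complex.conj_ofReal]
  have hdot1 : ∀ w : Fin M → ℂ, star bbar ⬝ᵥ w = (star g ⬝ᵥ B *ᵥ w) / s := by
    intro w
    rw [hstarbbar, smul_dotProduct, hflip, smul_eq_mul, div_eq_inv_mul]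
  have hdot2 : ∀ w : Fin M → ℂ, star w ⬝ᵥ bbar = star (star g ⬝ᵥ B *ᵥ w) / s := by
    intro w
    rw [hbbar', dotProduct_smul, smul_eq_mul, hconj g w, div_eq_inv_mul]
  -- quadratic form of Bbar
  have hquad : ∀ w : Fin M → ℂ, star w ⬝ᵥ Bbar *ᵥ w
      = star (star g ⬝ᵥ B *ᵥ w) * (star g ⬝ᵥ B *ᵥ w) / α := by
    intro w
    rw [hBbar, quad_vecMulVec, hdot1, hdot2, div_mul_div_comm, hs2]
  -- Cauchy–Schwarz style inequality
  have hkey : ∀ w : Fin M → ℂ,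
      star (star g ⬝ᵥ B *ᵥ w) * (star g ⬝ᵥ B *ᵥ w) / α ≤ star w ⬝ᵥ B *ᵥ w := by
    intro w
    set t : ℂ := star g ⬝ᵥ B *ᵥ w with ht
    have hexp := hB.dotProduct_mulVec_nonneg (w - (t / α) • g)
    have hstaru : star (w - (t / α) • g) = star w - (star t / α) • star g := by
      rw [star_sub, star_smul]
      congr 2
      rw [star_div₀, hαstar]
    rw [hstaru, mulVec_sub, mulVec_smul, sub_dotProduct, dotProduct_sub,
      dotProduct_sub] at hexp
    simp only [smul_dotProduct, dotProduct_smul, smul_eq_mul] at hexp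
    have e1 : star w ⬝ᵥ B *ᵥ g = star t := hconj g w
    have e2 : star g ⬝ᵥ B *ᵥ w = t := rfl
    have e3 : star g ⬝ᵥ B *ᵥ g = α := rfl
    rw [e1, e2, e3] at hexp
    have heq : star w ⬝ᵥ B *ᵥ w - t / α * star t
        - (star t / α * t - t / α * (star t / α * α))
        = star w ⬝ᵥ B *ᵥ w - star t * t / α := by
      field_simp
      ring
    rw [heq] at hexp
    exact sub_nonneg.mp hexp
  -- Abar PSD
  have hAbarPSD : Abar.PosSemidef := by
    refine Matrix.PosSemidef.of_dotProduct_mulVec_nonneg ?_ ?_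
    · rw [hAbar]
      exact ((hB.1.add hA.1).sub hBbarPSD.1)
    · intro w
      rw [hAbar, sub_mulVec, add_mulVec, dotProduct_sub, dotProduct_add, hquad]
      have h1 : (0:ℂ) ≤ star w ⬝ᵥ B *ᵥ w
          - star (star g ⬝ᵥ B *ᵥ w) * (star g ⬝ᵥ B *ᵥ w) / α :=
        sub_nonneg.mpr (hkey w)
      have h2 := hA.dotProduct_mulVec_nonneg w
      calc (0 : ℂ) ≤ (star w ⬝ᵥ B *ᵥ w
            - star (star g ⬝ᵥ B *ᵥ w) * (star g ⬝ᵥ B *ᵥ w) / α)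
            + star w ⬝ᵥ A *ᵥ w := add_nonneg h1 h2
        _ = star w ⬝ᵥ B *ᵥ w + star w ⬝ᵥ A *ᵥ w
            - star (star g ⬝ᵥ B *ᵥ w) * (star g ⬝ᵥ B *ᵥ w) / α := by ring
  -- sum
  have hsum : Bbar + Abar = B + A := by
    rw [hAbar]; abel
  refine ⟨hBbarPSD, hrank, hAbarPSD, hsum, ?_, ?_⟩
  · rw [← trace_add, hsum, trace_add]
  · rw [hquad g]
    rw [show star g ⬝ᵥ B *ᵥ g = α from rfl, hαstar, mul_div_assoc, div_self hα0, mul_one]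
end

section
/- Let M be a positive integer, let B and A be M×M complex Hermitian positive semidefinite matrices, and let g ∈ ℂ^M satisfy gᴴBg > 0. Define B̄ = (Bg)(Bg)ᴴ / (gᴴBg). Then the matrix Ā = B + A − B̄ is Hermitian positive semidefinite. -/
open Matrix ComplexOrder

private lemma dot_vecMulVec_dot {M : ℕ} (x y w : Fin M → ℂ) :
    star w ⬝ᵥ (vecMulVec x y) *ᵥ w = (star w ⬝ᵥ x) * (y ⬝ᵥ w) := by
  simp only [dotProduct, mulVec, vecMulVec_apply, Finset.sum_mul, Finset.mul_sum]
  rw [Finset.sum_comm]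
  congr 1; ext j; congr 1; ext i; ring

private lemma real_of_nonneg (z : ℂ) (hz : 0 ≤ z) : z = (z.re : ℂ) ∧ 0 ≤ z.re := by
  rw [Complex.le_def] at hz
  simp only [Complex.zero_re, Complex.zero_im] at hz
  exact ⟨by apply Complex.ext <;> simp [← hz.2], hz.1⟩

/-- The reconstructed sensing covariance `Abar = B + A - Bbar`, with
`Bbar = (B g)(B g)ᴴ / (gᴴ B g)`, is Hermitian positive semidefinite. -/
theorem reconstructed_sensing_covariance_posSemidef
    (M : ℕ) (hM : 0 < M)
    (B A : Matrix (Fin M) (Fin M) ℂ)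
    (hB : B.PosSemidef) (hA : A.PosSemidef)
    (g : Fin M → ℂ)
    (hg : 0 < star g ⬝ᵥ B *ᵥ g)
    (Bbar Abar : Matrix (Fin M) (Fin M) ℂ)
    (hBbar : Bbar = (star g ⬝ᵥ B *ᵥ g)⁻¹ • vecMulVec (B *ᵥ g) (star (B *ᵥ g)))
    (hAbar : Abar = B + A - Bbar) :
    Abar.PosSemidef := by
  set c : ℂ := star g ⬝ᵥ B *ᵥ g with hc
  have hcne : c ≠ 0 := ne_of_gt hg
  obtain ⟨hcim, hcre⟩ : c.im = 0 ∧ 0 < c.re := by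
    rw [Complex.lt_def] at hg
    simp only [Complex.zero_re, Complex.zero_im] at hg
    exact ⟨hg.2.symm, hg.1⟩
  have hcr : c = (c.re : ℂ) := by
    apply Complex.ext <;> simp [hcim]
  have hstarc : star c = c := by
    rw [RCLike.star_def, Complex.conj_eq_iff_im]; exact hcim
  set x : Fin M → ℂ := B *ᵥ g with hx
  refine posSemidef_iff_dotProduct_mulVec.mpr ⟨?_, ?_⟩
  · -- Hermitian
    rw [hAbar, hBbar]
    have h1 : ((c⁻¹ • vecMulVec x (star x)) : Matrix (Fin M) (Fin M) ℂ)ᴴ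
        = c⁻¹ • vecMulVec x (star x) := by
      rw [conjTranspose_smul, star_inv₀, hstarc]
      congr 1
      ext i j
      simp [conjTranspose_apply, vecMulVec_apply, mul_comm]
    show (B + A - c⁻¹ • vecMulVec x (star x))ᴴ = _
    rw [conjTranspose_sub, conjTranspose_add, hB.1, hA.1, h1]
  · intro w
    set d : ℂ := star w ⬝ᵥ B *ᵥ g with hd
    set b : ℂ := star w ⬝ᵥ B *ᵥ w with hb
    set a : ℂ := star w ⬝ᵥ A *ᵥ w with ha
    have e1 : star w ⬝ᵥ B *ᵥ g = d := rfl
    have e2 : star g ⬝ᵥ B *ᵥ g = c := rfl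
    have e3 : star w ⬝ᵥ B *ᵥ w = b := rfl
    have e4 : star w ⬝ᵥ x = d := rfl
    have e5 : star w ⬝ᵥ A *ᵥ w = a := rfl
    have hgw : star g ⬝ᵥ B *ᵥ w = star d := by
      rw [hd, ← star_dotProduct, star_mulVec, hB.1, ← dotProduct_mulVec]
    -- quadratic form of Abar
    have hform : star w ⬝ᵥ Abar *ᵥ w = b + a - c⁻¹ * (d * star d) := by
      rw [hAbar, hBbar, sub_mulVec, add_mulVec, dotProduct_sub, dotProduct_add,
        smul_mulVec, dotProduct_smul, smul_eq_mul, dot_vecMulVec_dot,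
        star_dotProduct (v := x)]
    rw [hform]
    -- Cauchy-Schwarz via auxiliary vector u
    set u : Fin M → ℂ := c • w - star d • g with hu
    have h0 : 0 ≤ star u ⬝ᵥ B *ᵥ u := hB.dotProduct_mulVec_nonneg u
    have hexp : star u ⬝ᵥ B *ᵥ u = c * (c * b - d * star d) := by
      rw [hu]
      simp only [star_sub, star_smul, star_star, sub_dotProduct, smul_dotProduct,
        mulVec_sub, mulVec_smul, dotProduct_sub, dotProduct_smul, smul_eq_mul]
      simp only [hgw, e1, e2, e3, hstarc]
      ring
    rw [hexp] at h0
    -- pass to real parts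
    obtain ⟨r, hr0, hrc⟩ : ∃ r : ℝ, 0 < r ∧ c = (r : ℂ) := ⟨c.re, hcre, hcr⟩
    obtain ⟨β, hβ0, hβ⟩ : ∃ β : ℝ, 0 ≤ β ∧ b = (β : ℂ) :=
      ⟨b.re, (real_of_nonneg b (hB.dotProduct_mulVec_nonneg w)).2, (real_of_nonneg b (hB.dotProduct_mulVec_nonneg w)).1⟩
    obtain ⟨α, hα0, hα⟩ : ∃ α : ℝ, 0 ≤ α ∧ a = (α : ℂ) :=
      ⟨a.re, (real_of_nonneg a (hA.dotProduct_mulVec_nonneg w)).2, (real_of_nonneg a (hA.dotProduct_mulVec_nonneg w)).1⟩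
    have hdd : d * star d = ((Complex.normSq d : ℝ) : ℂ) := by
      rw [RCLike.star_def, Complex.mul_conj]
    have h0' : (0 : ℂ) ≤ ((r * (r * β - Complex.normSq d) : ℝ) : ℂ) := by
      rw [show ((r * (r * β - Complex.normSq d) : ℝ) : ℂ)
          = c * (c * b - d * star d) by rw [hrc, hdd, hβ]; push_cast; ring]
      exact h0
    rw [Complex.zero_le_real] at h0'
    have hkey : Complex.normSq d ≤ r * β := by nlinarith
    have hfin : r⁻¹ * Complex.normSq d ≤ β := by
      rw [inv_mul_le_iff₀ hr0]; linarith
    have hgoal : b + a - c⁻¹ * (d * star d)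
        = ((β + α - r⁻¹ * Complex.normSq d : ℝ) : ℂ) := by
      rw [hrc, hdd, hβ, hα]; push_cast; ring
    rw [hgoal, Complex.zero_le_real]
    linarith
end
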